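/- arXiv:cs/0406044 — 5 statements merged into one kernel-verified Lean document; each statement's English description precedes it below -/
import Mathlib

section
/- A graph G satisfies F_χ(G) = 1 if and only if G is a connected bipartite graph with at least one edge (equivalently, χ(G) = 2 and G is connected). -/
open SimpleGraph

def properCol {V : Type*} (G : SimpleGraph V) (s : ℕ) (c : V → Fin s) : Prop :=
  ∀ ⦃u v⦄, G.Adj u v → c u ≠ c v

noncomputable def chrom {V : Type*} [Fintype V] (G : SimpleGraph V) : ℕ :=
  sInf {s | ∃ c : V → Fin s, properCol G s c}

def IsForcingSet {V : Type*} [Fintype V] (G : SimpleGraph V) (D : Finset V) : Prop :=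
  ∃ p : V → Fin (chrom G), ∃! c : V → Fin (chrom G),
    properCol G (chrom G) c ∧ ∀ v ∈ D, c v = p v

noncomputable def Fchi {V : Type*} [Fintype V] (G : SimpleGraph V) : ℕ :=
  sInf {k | ∃ D : Finset V, D.card = k ∧ IsForcingSet G D}

noncomputable def Npart {V : Type*} (G : SimpleGraph V) (s : ℕ) : ℕ :=
  Nat.card {r : V → V → Prop // ∃ c : V → Fin s,
    properCol G s c ∧ r = fun u v => c u = c v}

def tensorProd {V W : Type*} (G : SimpleGraph V) (H : SimpleGraph W) :
    SimpleGraph (V × W) where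
  Adj x y := G.Adj x.1 y.1 ∧ H.Adj x.2 y.2
  symm := ⟨fun _ _ h => ⟨h.1.symm, h.2.symm⟩⟩
  loopless := ⟨fun x h => G.loopless.irrefl x.1 h.1⟩

/-!
A coloring extending a forcing set is rigid under recoloring: permuting two colors, globally or
on a single connected component, yields another proper coloring, which must therefore disagree
with it somewhere on the forcing set. Swapping two colors absent from the set shows that
`χ(G) ≤ |D| + 1`, so a forcing singleton gives `χ(G) ≤ 2`; swapping on a component missing the
set shows that every component meets it, so a forcing singleton makes `G` connected.
Conversely, for `χ(G) = 2` a proper coloring propagates uniquely along walks from one vertex.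
-/

namespace Nat

theorem sInf_eq_one_iff {S : Set ℕ} : sInf S = 1 ↔ 1 ∈ S ∧ 0 ∉ S := by
  constructor
  · intro h
    have hne : S.Nonempty := Set.nonempty_iff_ne_empty.2 fun hS => by simp [hS] at h
    exact ⟨h ▸ Nat.sInf_mem hne, fun h0 => by simpa [h] using Nat.sInf_le h0⟩
  · rintro ⟨h1, h0⟩
    have hpos : sInf S ≠ 0 := fun h => by
      rcases Nat.sInf_eq_zero.1 h with h | h
      · exact h0 h
      · simp [h] at h1
    have := Nat.sInf_le h1
    omega

end Nat

theorem Fin.eq_of_ne_of_ne {s : ℕ} (hs : s ≤ 2) {a b b' : Fin s} (hb : b ≠ a)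
    (hb' : b' ≠ a) : b = b' := by
  rw [Ne, Fin.ext_iff] at hb hb'
  ext
  omega

section

variable {V : Type*} {G : SimpleGraph V}

theorem properCol.comp_injective {s t : ℕ} {c : V → Fin s} (hc : properCol G s c)
    {f : Fin s → Fin t} (hf : f.Injective) : properCol G t (f ∘ c) :=
  fun _ _ huv he => hc huv (hf he)

theorem properCol.piecewise {s : ℕ} {c c' : V → Fin s} (hc : properCol G s c)
    (hc' : properCol G s c') {S : Set V} [DecidablePred (· ∈ S)]
    (hS : ∀ ⦃u v⦄, G.Adj u v → u ∈ S → v ∈ S) : properCol G s (S.piecewise c c') := by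
  intro u v huv
  by_cases hu : u ∈ S
  · simpa [Set.piecewise_eq_of_mem, hu, hS huv hu] using hc huv
  · have hv : v ∉ S := fun hv => hu (hS huv.symm hv)
    simpa [Set.piecewise_eq_of_notMem, hu, hv] using hc' huv

theorem properCol.eq_of_reachable {s : ℕ} (hs : s ≤ 2) {c c' : V → Fin s}
    (hc : properCol G s c) (hc' : properCol G s c') {u w : V} (huw : G.Reachable u w)
    (hu : c u = c' u) : c w = c' w := by
  obtain ⟨p⟩ := huw
  induction p with
  | nil => exact hu
  | cons hadj _ ih => exact ih (Fin.eq_of_ne_of_ne hs (hc hadj).symm (hu ▸ (hc' hadj).symm))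

variable [Fintype V]

theorem exists_properCol_chrom (G : SimpleGraph V) : ∃ c, properCol G (chrom G) c := by
  classical
  have hne : {s | ∃ c : V → Fin s, properCol G s c}.Nonempty := ⟨Fintype.card V,
    Fintype.equivFin V, fun _ _ huv he => G.ne_of_adj huv ((Fintype.equivFin V).injective he)⟩
  exact Nat.sInf_mem hne

theorem chrom_le_of_properCol {s : ℕ} {c : V → Fin s} (hc : properCol G s c) : chrom G ≤ s :=
  Nat.sInf_le ⟨c, hc⟩

theorem chrom_le_card_image {s : ℕ} {c : V → Fin s} (hc : properCol G s c) :
    chrom G ≤ (Finset.univ.image c).card := by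
  set e := (Finset.univ.image c).equivFin
  refine chrom_le_of_properCol
    (c := fun u => e ⟨c u, Finset.mem_image_of_mem c (Finset.mem_univ u)⟩)
    fun _ _ huv he => hc huv ?_
  simpa using e.injective he

theorem isForcingSet_iff {D : Finset V} :
    IsForcingSet G D ↔ ∃ c, properCol G (chrom G) c ∧
      ∀ c', properCol G (chrom G) c' → (∀ v ∈ D, c' v = c v) → c' = c := by
  constructor
  · rintro ⟨p, c, ⟨hc, hp⟩, huniq⟩
    exact ⟨c, hc, fun c' hc' hD => huniq c' ⟨hc', fun v hv => (hD v hv).trans (hp v hv)⟩⟩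
  · rintro ⟨c, hc, huniq⟩
    exact ⟨c, c, ⟨hc, fun _ _ => rfl⟩, fun c' ⟨hc', hD⟩ => huniq c' hc' hD⟩

theorem IsForcingSet.chrom_le_card_add_one {D : Finset V} (hD : IsForcingSet G D) :
    chrom G ≤ D.card + 1 := by
  obtain ⟨c, hc, huniq⟩ := isForcingSet_iff.1 hD
  by_contra! hlt
  have hcolors : ∀ u, c u ∈ D.image c := by
    intro u
    by_contra hu
    obtain ⟨b, -, hb⟩ := Finset.exists_mem_notMem_of_card_lt_card
      (s := insert (c u) (D.image c)) (t := Finset.univ) <| calc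
        (insert (c u) (D.image c)).card ≤ (D.image c).card + 1 := Finset.card_insert_le _ _
        _ ≤ D.card + 1 := by gcongr; exact Finset.card_image_le
        _ < chrom G := hlt
        _ = Finset.univ.card := by simp
    rw [Finset.mem_insert, not_or] at hb
    have hswap := huniq (Equiv.swap (c u) b ∘ c) (hc.comp_injective (Equiv.injective _))
      fun v hv => Equiv.swap_apply_of_ne_of_ne
        (fun h => hu (h ▸ Finset.mem_image_of_mem c hv))
        fun h => hb.2 (h ▸ Finset.mem_image_of_mem c hv)
    have := congrFun hswap u
    simp only [Function.comp_apply, Equiv.swap_apply_left] at this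
    exact hb.1 this
  have := calc
    chrom G ≤ (Finset.univ.image c).card := chrom_le_card_image hc
    _ ≤ (D.image c).card := Finset.card_le_card fun x hx => by
      obtain ⟨u, -, rfl⟩ := Finset.mem_image.1 hx
      exact hcolors u
    _ ≤ D.card := Finset.card_image_le
  omega

theorem IsForcingSet.exists_mem_reachable {D : Finset V} (hD : IsForcingSet G D)
    (h2 : 2 ≤ chrom G) (u : V) : ∃ v ∈ D, G.Reachable v u := by
  classical
  obtain ⟨c, hc, huniq⟩ := isForcingSet_iff.1 hD
  by_contra! hfar
  have : Nontrivial (Fin (chrom G)) := Fin.nontrivial_iff_two_le.2 h2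
  obtain ⟨b, hb⟩ := exists_ne (c u)
  let S := {w | G.Reachable u w}
  have hS : ∀ ⦃x y⦄, G.Adj x y → x ∈ S → y ∈ S :=
    fun _ _ hxy hx => hx.trans hxy.reachable
  have hflip := huniq (S.piecewise (Equiv.swap (c u) b ∘ c) c)
    ((hc.comp_injective (Equiv.injective _)).piecewise hc hS)
    fun v hv => Set.piecewise_eq_of_notMem S _ _ fun hvS => hfar v hv hvS.symm
  have := congrFun hflip u
  rw [Set.piecewise_eq_of_mem S _ _ (Reachable.refl u), Function.comp_apply,
    Equiv.swap_apply_left] at this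
  exact hb this

theorem IsForcingSet.connected_of_singleton {v : V} (hv : IsForcingSet G {v})
    (h2 : 2 ≤ chrom G) : G.Connected := by
  refine (connected_iff_exists_forall_reachable G).2 ⟨v, fun u => ?_⟩
  simpa using hv.exists_mem_reachable h2 u

theorem isForcingSet_singleton_of_connected (h2 : chrom G = 2) (hG : G.Connected) (v : V) :
    IsForcingSet G {v} := by
  obtain ⟨c, hc⟩ := exists_properCol_chrom G
  refine isForcingSet_iff.2 ⟨c, hc, fun c' hc' hv => funext fun u => ?_⟩
  exact hc'.eq_of_reachable h2.le hc (hG.preconnected v u) (hv v (Finset.mem_singleton_self v))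

theorem isForcingSet_empty_iff : IsForcingSet G ∅ ↔ chrom G ≤ 1 := by
  refine ⟨IsForcingSet.chrom_le_card_add_one, fun h => ?_⟩
  obtain ⟨c, hc⟩ := exists_properCol_chrom G
  have : Subsingleton (Fin (chrom G)) := Fin.subsingleton_iff_le_one.2 h
  exact isForcingSet_iff.2 ⟨c, hc, fun _ _ _ => Subsingleton.elim _ _⟩

theorem Fchi_eq_one_iff :
    Fchi G = 1 ↔ (∃ v, IsForcingSet G {v}) ∧ ¬ IsForcingSet G ∅ := by
  simp only [Fchi, Nat.sInf_eq_one_iff, Set.mem_ofPred_eq, Finset.card_eq_one,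
    Finset.card_eq_zero]
  constructor
  · rintro ⟨⟨D, ⟨v, rfl⟩, hD⟩, h0⟩
    exact ⟨⟨v, hD⟩, fun h => h0 ⟨∅, rfl, h⟩⟩
  · rintro ⟨⟨v, hv⟩, h0⟩
    exact ⟨⟨{v}, ⟨v, rfl⟩, hv⟩, fun ⟨D, hD, h⟩ => h0 (hD ▸ h)⟩

end

theorem stmt1 {V : Type*} [Fintype V] (G : SimpleGraph V) :
    Fchi G = 1 ↔ (chrom G = 2 ∧ G.Connected) := by
  rw [Fchi_eq_one_iff, isForcingSet_empty_iff, not_le]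
  constructor
  · rintro ⟨⟨v, hv⟩, h2⟩
    have := hv.chrom_le_card_add_one
    rw [Finset.card_singleton] at this
    exact ⟨by omega, hv.connected_of_singleton h2⟩
  · rintro ⟨h2, hG⟩
    obtain ⟨v⟩ := hG.nonempty
    exact ⟨⟨v, isForcingSet_singleton_of_connected h2 hG v⟩, by omega⟩
end

section
/- The Cartesian product G × H is 3-colorable if and only if both G and H are 3-colorable. -/
open SimpleGraph

/-! Restricting a colouring of `G □ H` to a fibre `G × {w}` or `{v} × H` colours the factors;
conversely, if `cG` and `cH` colour `G` and `H` with values in `ℤ/s`, then `(u, w) ↦ cG u + cH w`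
colours `G □ H`, since along an edge of the product exactly one summand changes. -/

section BoxProd

variable {V W : Type*} {G : SimpleGraph V} {H : SimpleGraph W} {s : ℕ}

theorem properCol.comp_boxProd_left {c : V × W → Fin s} (hc : properCol (G □ H) s c) (w : W) :
    properCol G s fun v => c (v, w) :=
  fun _ _ huv => hc (boxProd_adj_left.mpr huv)

theorem properCol.comp_boxProd_right {c : V × W → Fin s} (hc : properCol (G □ H) s c) (v : V) :
    properCol H s fun w => c (v, w) :=
  fun _ _ hww' => hc (boxProd_adj_right.mpr hww')

theorem properCol.boxProd_add [NeZero s] {cG : V → Fin s} {cH : W → Fin s}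
    (hG : properCol G s cG) (hH : properCol H s cH) :
    properCol (G □ H) s fun p => cG p.1 + cH p.2 := by
  rintro ⟨u₁, u₂⟩ ⟨v₁, v₂⟩ (⟨h, rfl⟩ | ⟨h, rfl⟩) heq
  · exact hG h (add_right_cancel heq)
  · exact hH h (add_left_cancel heq)

theorem exists_properCol_boxProd_iff [Nonempty V] [Nonempty W] [NeZero s] :
    (∃ c : V × W → Fin s, properCol (G □ H) s c) ↔
      (∃ c : V → Fin s, properCol G s c) ∧ (∃ c : W → Fin s, properCol H s c) := by
  constructor
  · rintro ⟨c, hc⟩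
    exact ⟨⟨_, hc.comp_boxProd_left (Classical.arbitrary W)⟩,
      ⟨_, hc.comp_boxProd_right (Classical.arbitrary V)⟩⟩
  · rintro ⟨⟨cG, hG⟩, ⟨cH, hH⟩⟩
    exact ⟨_, hG.boxProd_add hH⟩

end BoxProd

theorem stmt8 {V W : Type*} [Nonempty V] [Nonempty W]
    (G : SimpleGraph V) (H : SimpleGraph W) :
    (∃ c : V × W → Fin 3, properCol (G.boxProd H) 3 c) ↔
      (∃ c : V → Fin 3, properCol G 3 c) ∧ (∃ c : W → Fin 3, properCol H 3 c) :=
  exists_properCol_boxProd_iff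
end

section
/- Let G be a connected graph and let p be a proper coloring of one Kₙ-layer {u} × V(Kₙ) of the categorical product G · Kₙ that assigns n pairwise distinct colors to the n vertices of that layer. Then p has at most one extension to a proper n-coloring of G · Kₙ, namely the coloring c(v,i) = p(u,i) induced by the Kₙ factor. -/
open SimpleGraph

/-!
If a proper `n`-coloring `c` of `G × Kₙ` agrees with a bijection `p` on the layer of `v`, and
`w` is a neighbour of `v`, write `c (w, j) = p i`; were `i ≠ j`, the vertices `(v, i)` and
`(w, j)` would be adjacent and equally colored. So `c` agrees with `p` on the layer of `w` too,
and connectivity carries this from the layer of `u` to every layer.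
-/

theorem SimpleGraph.Reachable.induction_of_adj {V : Type*} {G : SimpleGraph V} {P : V → Prop}
    {u v : V} (h : G.Reachable u v) (hP : ∀ ⦃a b⦄, G.Adj a b → P a → P b) (hu : P u) : P v := by
  rw [reachable_iff_reflTransGen] at h
  induction h with
  | refl => exact hu
  | tail _ hab ih => exact hP hab ih

theorem tensorProd_top_layer_eq_of_adj {V W : Type*} {G : SimpleGraph V} {s : ℕ}
    {c : V × W → Fin s} (hc : properCol (tensorProd G ⊤) s c) {p : W → Fin s}
    (hp : Function.Surjective p) {v w : V} (hvw : G.Adj v w) (hv : ∀ i, c (v, i) = p i)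
    (j : W) : c (w, j) = p j := by
  obtain ⟨i, hi⟩ := hp (c (w, j))
  obtain rfl : i = j := by
    by_contra hij
    exact hc (show (tensorProd G ⊤).Adj (v, i) (w, j) from ⟨hvw, hij⟩) (by rw [hv i, hi])
  exact hi.symm

theorem stmt9 {V : Type*} (G : SimpleGraph V) (hconn : G.Connected)
    (n : ℕ) (u : V) (p : Fin n → Fin n) (hp : Function.Injective p)
    (c : V × Fin n → Fin n)
    (hc : properCol (tensorProd G (⊤ : SimpleGraph (Fin n))) n c)
    (hext : ∀ i : Fin n, c (u, i) = p i) :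
    ∀ (v : V) (i : Fin n), c (v, i) = p i := by
  have hsurj : Function.Surjective p := Finite.surjective_of_injective hp
  intro v
  exact (hconn u v).induction_of_adj (P := fun x => ∀ i, c (x, i) = p i)
    (fun _ _ hab => tensorProd_top_layer_eq_of_adj hc hsurj hab) hext
end

section
/- Every proper 3-coloring of the categorical product K₃ · K₃ is induced by one of the two factors; that is, for every proper 3-coloring c of K₃ · K₃, either c(i,j) depends only on i, or c(i,j) depends only on j. -/
open SimpleGraph

/-!
Two vertices of `K_n × K_n` are non-adjacent exactly when they share a row or a column, so a
colour class of a proper colouring lies in a single row or column and has at most `n` elements.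
With at most `n` colours for `n²` vertices every class is therefore a full row or a full column.
A full row and a full column meet, so they cannot both be classes: their union would be one
class and contains an edge. Hence either all classes are rows or all are columns.
-/

open Finset

namespace TensorProd

variable {α β : Type*}

def row [Fintype β] (i : α) : Finset (α × β) := {i} ×ˢ univ

def col [Fintype α] (j : β) : Finset (α × β) := univ ×ˢ {j}

@[simp]
theorem mem_row [Fintype β] {i : α} {u : α × β} : u ∈ row i ↔ u.1 = i := by
  simp only [row, mem_product, mem_singleton, mem_univ, and_true]

@[simp]
theorem mem_col [Fintype α] {j : β} {u : α × β} : u ∈ col j ↔ u.2 = j := by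
  simp only [col, mem_product, mem_singleton, mem_univ, true_and]

theorem card_row [Fintype β] (i : α) : #(row i : Finset (α × β)) = Fintype.card β := by
  simp [row]

theorem card_col [Fintype α] (j : β) : #(col j : Finset (α × β)) = Fintype.card α := by
  simp [col]

theorem fst_eq_or_snd_eq_of_pairwise {S : Set (α × β)}
    (hS : ∀ u ∈ S, ∀ v ∈ S, u.1 = v.1 ∨ u.2 = v.2) :
    (∀ u ∈ S, ∀ v ∈ S, u.1 = v.1) ∨ (∀ u ∈ S, ∀ v ∈ S, u.2 = v.2) := by
  refine or_iff_not_imp_left.2 fun h ↦ ?_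
  simp only [not_forall] at h
  obtain ⟨u, hu, v, hv, huv⟩ := h
  have hsnd : ∀ x ∈ S, x.2 = u.2 := by
    intro x hx
    by_cases hxu : x.1 = u.1
    · rw [(hS x hx v hv).resolve_left (hxu ▸ huv), (hS u hu v hv).resolve_left huv]
    · exact (hS x hx u hu).resolve_left hxu
  intro x hx y hy
  rw [hsnd x hx, hsnd y hy]

def colorClass {V κ : Type*} [Fintype V] [DecidableEq κ] (c : V → κ) (k : κ) : Finset V :=
  {v | c v = k}

@[simp]
theorem mem_colorClass {V κ : Type*} [Fintype V] [DecidableEq κ] {c : V → κ} {k : κ} {v : V} :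
    v ∈ colorClass c k ↔ c v = k := by
  simp [colorClass]

variable {s : ℕ}

theorem fst_eq_or_snd_eq_of_color_eq {c : α × β → Fin s}
    (hc : properCol (tensorProd (⊤ : SimpleGraph α) (⊤ : SimpleGraph β)) s c)
    {u v : α × β} (h : c u = c v) : u.1 = v.1 ∨ u.2 = v.2 := by
  by_contra! huv
  exact hc ⟨(top_adj _ _).2 huv.1, (top_adj _ _).2 huv.2⟩ h

theorem not_color_const_on_row_and_col [Nontrivial α] [Nontrivial β] {c : α × β → Fin s}
    (hc : properCol (tensorProd (⊤ : SimpleGraph α) (⊤ : SimpleGraph β)) s c) {u v : α × β}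
    (hu : ∀ j, c (u.1, j) = c u) (hv : ∀ i, c (i, v.2) = c v) : False := by
  obtain ⟨j, hj⟩ := exists_ne v.2
  obtain ⟨i, hi⟩ := exists_ne u.1
  apply hc (u := (u.1, j)) (v := (i, v.2)) ⟨(top_adj _ _).2 hi.symm, (top_adj _ _).2 hj⟩
  rw [hu j, hv i]
  exact (hu v.2).symm.trans (hv u.1)

theorem colorClass_fst_eq_or_snd_eq [Fintype α] [Fintype β] {c : α × β → Fin s}
    (hc : properCol (tensorProd (⊤ : SimpleGraph α) (⊤ : SimpleGraph β)) s c) (k : Fin s) :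
    (∀ u ∈ colorClass c k, ∀ v ∈ colorClass c k, u.1 = v.1) ∨
      (∀ u ∈ colorClass c k, ∀ v ∈ colorClass c k, u.2 = v.2) :=
  fst_eq_or_snd_eq_of_pairwise fun _ hu _ hv ↦
    fst_eq_or_snd_eq_of_color_eq hc ((mem_colorClass.1 hu).trans (mem_colorClass.1 hv).symm)

variable [Fintype α] {c : α × α → Fin s}

theorem card_colorClass_le (hc : properCol (tensorProd (⊤ : SimpleGraph α) ⊤) s c) (k : Fin s) :
    #(colorClass c k) ≤ Fintype.card α := by
  rw [← card_univ]
  rcases colorClass_fst_eq_or_snd_eq hc k with h | h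
  · exact card_le_card_of_injOn Prod.snd (fun _ _ ↦ mem_univ _)
      fun x hx y hy hxy ↦ Prod.ext (h x hx y hy) hxy
  · exact card_le_card_of_injOn Prod.fst (fun _ _ ↦ mem_univ _)
      fun x hx y hy hxy ↦ Prod.ext hxy (h x hx y hy)

theorem card_colorClass_eq (hc : properCol (tensorProd (⊤ : SimpleGraph α) ⊤) s c)
    (hs : s ≤ Fintype.card α) (k : Fin s) : #(colorClass c k) = Fintype.card α := by
  have hsum : ∑ k, #(colorClass c k) = ∑ _k : Fin s, Fintype.card α := by
    refine le_antisymm (sum_le_sum fun k _ ↦ card_colorClass_le hc k) ?_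
    calc ∑ _k : Fin s, Fintype.card α = s * Fintype.card α := by simp
      _ ≤ Fintype.card α * Fintype.card α := Nat.mul_le_mul_right _ hs
      _ = #(univ : Finset (α × α)) := by simp
      _ = ∑ k, #(colorClass c k) :=
        card_eq_sum_card_fiberwise fun _ _ ↦ mem_coe.2 (mem_univ _)
  exact (sum_eq_sum_iff_of_le fun k _ ↦ card_colorClass_le hc k).1 hsum k (mem_univ k)

theorem color_const_on_row_or_col (hc : properCol (tensorProd (⊤ : SimpleGraph α) ⊤) s c)
    (hs : s ≤ Fintype.card α) (u : α × α) :
    (∀ j, c (u.1, j) = c u) ∨ (∀ i, c (i, u.2) = c u) := by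
  have hu : u ∈ colorClass c (c u) := mem_colorClass.2 rfl
  rcases colorClass_fst_eq_or_snd_eq hc (c u) with h | h
  · have hrow : colorClass c (c u) = row u.1 :=
      eq_of_subset_of_card_le (fun x hx ↦ mem_row.2 (h x hx u hu))
        (by rw [card_row, card_colorClass_eq hc hs])
    exact Or.inl fun j ↦ mem_colorClass.1 (hrow ▸ mem_row.2 rfl)
  · have hcol : colorClass c (c u) = col u.2 :=
      eq_of_subset_of_card_le (fun x hx ↦ mem_col.2 (h x hx u hu))
        (by rw [card_col, card_colorClass_eq hc hs])
    exact Or.inr fun i ↦ mem_colorClass.1 (hcol ▸ mem_col.2 rfl)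

theorem color_const_on_rows_or_cols [Nontrivial α]
    (hc : properCol (tensorProd (⊤ : SimpleGraph α) ⊤) s c) (hs : s ≤ Fintype.card α) :
    (∀ i j j', c (i, j) = c (i, j')) ∨ (∀ i i' j, c (i, j) = c (i', j)) := by
  by_cases hrows : ∀ (u : α × α) j, c (u.1, j) = c u
  · exact Or.inl fun i j j' ↦ (hrows (i, j) j').symm
  obtain ⟨u, hu⟩ := not_forall.1 hrows
  have hcolu := (color_const_on_row_or_col hc hs u).resolve_left hu
  have hcols (v : α × α) : ∀ i, c (i, v.2) = c v :=
    (color_const_on_row_or_col hc hs v).resolve_left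
      fun hv ↦ not_color_const_on_row_and_col hc hv hcolu
  exact Or.inr fun i i' j ↦ (hcols (i, j) i').symm

end TensorProd

theorem stmt10
    (c : Fin 3 × Fin 3 → Fin 3)
    (hc : properCol (tensorProd (⊤ : SimpleGraph (Fin 3)) (⊤ : SimpleGraph (Fin 3))) 3 c) :
    (∀ (i j j' : Fin 3), c (i, j) = c (i, j')) ∨
    (∀ (i i' j : Fin 3), c (i, j) = c (i', j)) :=
  TensorProd.color_const_on_rows_or_cols hc (Fintype.card_fin 3).ge
end

section
/- If G is a connected graph containing a triangle, then F_χ((G · K₃) × K₃) ≤ 3. -/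
open SimpleGraph

/-!
Let `a b t` be a triangle of `G`. The 3-colouring `((v, i), j) ↦ i + j` of `(G · K₃) × K₃` is forced
by its values on `((a, 0), 0)`, `((a, 1), 0)`, `((a, 0), 1)`. Write `M i j = c((a, i), j)` for a
proper 3-colouring `c`. Each layer `x ↦ c(x, j)` is a 3-colouring of `G · K₃`; on the triangle, two
different colours among `M 0 j, M 1 j` force the third one (otherwise two adjacent vertices of
`{b, t} × K₃` would both receive the missing colour). Together with the `K₃`-fibres `j ↦ M i j`
this turns the three prescribed colours into the Latin square `M i j = i + j`. Finally, if the
fibre of `v` in a colouring of `G · K₃` uses every colour, then the fibre of a neighbour `w`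
carries the same colours in the same positions, since `(w, i)` is adjacent to `(v, k)` for all
`k ≠ i`; connectivity of `G` spreads `i + j` to every vertex.
-/

lemma properCol_layer {U W : Type*} {H : SimpleGraph U} {K : SimpleGraph W} {s : ℕ}
    {c : U × W → Fin s} (hc : properCol (H □ K) s c) (j : W) :
    properCol H s fun x => c (x, j) :=
  fun _ _ h => hc (boxProd_adj.mpr (Or.inl ⟨h, rfl⟩))

lemma properCol_fiber {U W : Type*} {H : SimpleGraph U} {K : SimpleGraph W} {s : ℕ}
    {c : U × W → Fin s} (hc : properCol (H □ K) s c) (x : U) :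
    properCol K s fun j => c (x, j) :=
  fun _ _ h => hc (boxProd_adj.mpr (Or.inr ⟨h, rfl⟩))

lemma le_of_properCol_boxProd_top {U : Type*} [Nonempty U] {H : SimpleGraph U} {n s : ℕ}
    {c : U × Fin n → Fin s} (hc : properCol (H □ ⊤) s c) : n ≤ s := by
  obtain ⟨x⟩ := ‹Nonempty U›
  have hinj : Function.Injective fun j => c (x, j) := fun j j' h => by
    by_contra hne
    exact properCol_fiber hc x hne h
  simpa using Fintype.card_le_of_injective _ hinj

lemma chrom_eq_of_properCol {U : Type*} [Fintype U] {H : SimpleGraph U} {s : ℕ}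
    {c : U → Fin s} (hc : properCol H s c)
    (hmin : ∀ s' (c' : U → Fin s'), properCol H s' c' → s ≤ s') : chrom H = s :=
  le_antisymm (Nat.sInf_le ⟨c, hc⟩) (le_csInf ⟨s, c, hc⟩ fun _ ⟨c', hc'⟩ => hmin _ c' hc')

lemma isForcingSet_of_forall_eq {U : Type*} [Fintype U] {H : SimpleGraph U} {D : Finset U}
    {s : ℕ} (hs : chrom H = s) {c₀ : U → Fin s} (hc₀ : properCol H s c₀)
    (huniq : ∀ c, properCol H s c → (∀ v ∈ D, c v = c₀ v) → c = c₀) : IsForcingSet H D := by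
  subst hs
  exact ⟨c₀, c₀, ⟨hc₀, fun _ _ => rfl⟩, fun c hc => huniq c hc.1 hc.2⟩

lemma Fchi_le_card {U : Type*} [Fintype U] {H : SimpleGraph U} {D : Finset U}
    (hD : IsForcingSet H D) : Fchi H ≤ D.card :=
  Nat.sInf_le ⟨D, rfl, hD⟩

section TensorTop

variable {V W α : Type*} {G : SimpleGraph V} {f : V × W → α}

lemma fiber_eq_of_adj (hf : ∀ ⦃x y⦄, (tensorProd G ⊤).Adj x y → f x ≠ f y) {g : W → α}
    (hg : Function.Surjective g) {v w : V} (hvw : G.Adj v w) (hv : ∀ i, f (v, i) = g i)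
    (i : W) : f (w, i) = g i := by
  obtain ⟨k, hk⟩ := hg (f (w, i))
  by_contra hne
  have hki : k ≠ i := by
    rintro rfl
    exact hne hk.symm
  exact hf (x := (v, k)) (y := (w, i)) ⟨hvw, hki⟩ (by rw [hv, hk])

lemma fiber_eq_of_connected (hf : ∀ ⦃x y⦄, (tensorProd G ⊤).Adj x y → f x ≠ f y)
    (hG : G.Connected) {g : W → α} (hg : Function.Surjective g) {a : V}
    (ha : ∀ i, f (a, i) = g i) (v : V) (i : W) : f (v, i) = g i := by
  obtain ⟨p⟩ := hG.preconnected a v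
  induction p with
  | nil => exact ha i
  | cons hvw _ ih => exact ih (fiber_eq_of_adj hf hg hvw ha)

end TensorTop

lemma triangle_fiber_ne {V : Type*} {G : SimpleGraph V} {f : V × Fin 3 → Fin 3}
    (hf : properCol (tensorProd G ⊤) 3 f) {a b t : V} (hab : G.Adj a b) (hbt : G.Adj b t)
    (hat : G.Adj a t) (h01 : f (a, 0) ≠ f (a, 1)) :
    f (a, 2) ≠ f (a, 0) ∧ f (a, 2) ≠ f (a, 1) := by
  have hadj : ∀ {u w : V}, G.Adj u w → ∀ {i k : Fin 3}, i ≠ k → f (u, i) ≠ f (w, k) :=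
    fun huw i k hik => hf (u := (_, i)) (v := (_, k)) ⟨huw, hik⟩
  constructor
  · intro h20
    have hb2 := hadj hab (i := 0) (k := 2) (by decide)
    have hb2' := hadj hab (i := 1) (k := 2) (by decide)
    have ht0 := hadj hat (i := 1) (k := 0) (by decide)
    have ht0' := hadj hat (i := 2) (k := 0) (by decide)
    exact hadj hbt (i := 2) (k := 0) (by decide) (by omega)
  · intro h21
    have hb1 := hadj hab (i := 0) (k := 1) (by decide)
    have hb1' := hadj hab (i := 2) (k := 1) (by decide)
    have ht2 := hadj hat (i := 0) (k := 2) (by decide)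
    have ht2' := hadj hat (i := 1) (k := 2) (by decide)
    exact hadj hbt (i := 1) (k := 2) (by decide) (by omega)

def addColoring {V : Type*} (x : (V × Fin 3) × Fin 3) : Fin 3 := x.1.2 + x.2

section Product

variable {V : Type*} {G : SimpleGraph V}

lemma properCol_addColoring :
    properCol ((tensorProd G ⊤).boxProd (⊤ : SimpleGraph (Fin 3))) 3 addColoring := by
  rintro ⟨⟨v, i⟩, j⟩ ⟨⟨w, k⟩, l⟩ h
  rcases boxProd_adj.mp h with ⟨⟨-, hik⟩, hjl⟩ | ⟨hjl, hvi⟩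
  · simp only at hjl
    subst hjl
    exact fun h => hik (add_right_cancel h)
  · simp only [Prod.mk.injEq] at hvi
    obtain ⟨rfl, rfl⟩ := hvi
    exact fun h => hjl (add_left_cancel h)

lemma triangle_fiber_eq_add {c : (V × Fin 3) × Fin 3 → Fin 3}
    (hc : properCol ((tensorProd G ⊤).boxProd (⊤ : SimpleGraph (Fin 3))) 3 c)
    {a b t : V} (hab : G.Adj a b) (hbt : G.Adj b t) (hat : G.Adj a t)
    (h00 : c ((a, 0), 0) = 0) (h10 : c ((a, 1), 0) = 1) (h01 : c ((a, 0), 1) = 1) (i j : Fin 3) :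
    c ((a, i), j) = i + j := by
  have row : ∀ i {j j' : Fin 3}, j ≠ j' → c ((a, i), j) ≠ c ((a, i), j') :=
    fun i _ _ h => properCol_fiber hc (a, i) h
  have layer : ∀ j, c ((a, 0), j) ≠ c ((a, 1), j) →
      c ((a, 2), j) ≠ c ((a, 0), j) ∧ c ((a, 2), j) ≠ c ((a, 1), j) :=
    fun j => triangle_fiber_ne (properCol_layer hc j) hab hbt hat
  have h20 : c ((a, 2), 0) = 2 := by
    have := layer 0 (by omega)
    omega
  have h11_ne := row 1 (j := 1) (j' := 0) (by decide)
  have h21_ne := row 2 (j := 1) (j' := 0) (by decide)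
  have h21_ne' := layer 1 (by omega)
  have h21 : c ((a, 2), 1) = 0 := by omega
  have h11 : c ((a, 1), 1) = 2 := by omega
  have h2 : ∀ i, c ((a, i), 2) ≠ c ((a, i), 0) ∧ c ((a, i), 2) ≠ c ((a, i), 1) :=
    fun i => ⟨row i (by decide), row i (by decide)⟩
  have h02_ne := h2 0
  have h12_ne := h2 1
  have h22_ne := h2 2
  fin_cases i <;> fin_cases j <;>
    simp only [Fin.zero_eta, Fin.mk_one, Fin.reduceFinMk, Fin.reduceAdd] <;> omega

lemma eq_addColoring_of_triangle {c : (V × Fin 3) × Fin 3 → Fin 3}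
    (hc : properCol ((tensorProd G ⊤).boxProd (⊤ : SimpleGraph (Fin 3))) 3 c)
    (hG : G.Connected) {a b t : V} (hab : G.Adj a b) (hbt : G.Adj b t) (hat : G.Adj a t)
    (h00 : c ((a, 0), 0) = 0) (h10 : c ((a, 1), 0) = 1) (h01 : c ((a, 0), 1) = 1) :
    c = addColoring := by
  funext ⟨⟨v, i⟩, j⟩
  exact fiber_eq_of_connected (f := fun x => c (x, j)) (properCol_layer hc j) hG
    (add_right_surjective j) (fun i => triangle_fiber_eq_add hc hab hbt hat h00 h10 h01 i j) v i

end Product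

theorem stmt16 {V : Type*} [Fintype V] (G : SimpleGraph V)
    (hconn : G.Connected) (htri : ∃ a b c : V, G.Adj a b ∧ G.Adj b c ∧ G.Adj a c) :
    Fchi ((tensorProd G (⊤ : SimpleGraph (Fin 3))).boxProd (⊤ : SimpleGraph (Fin 3))) ≤ 3 := by
  classical
  obtain ⟨a, b, t, hab, hbt, hat⟩ := htri
  have : Nonempty V := ⟨a⟩
  have hchrom := chrom_eq_of_properCol (properCol_addColoring (G := G))
    fun _ _ hc => le_of_properCol_boxProd_top hc
  have hforcing : IsForcingSet ((tensorProd G ⊤).boxProd ⊤)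
      ({((a, 0), 0), ((a, 1), 0), ((a, 0), 1)} : Finset ((V × Fin 3) × Fin 3)) :=
    isForcingSet_of_forall_eq hchrom properCol_addColoring fun c hc hD =>
      eq_addColoring_of_triangle hc hconn hab hbt hat
        (hD _ (by simp)) (hD _ (by simp)) (hD _ (by simp))
  exact (Fchi_le_card hforcing).trans Finset.card_le_three
end
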